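/- The number of rooted G-configurations of size n (root allowed to be any vertex) equals \sum_{k=1}^{n} C(n,k) * k^{k-1} * (n-1)!/(k-1)!. -/

import Mathlib

/-- A rooted `G`-configuration of size `n`: a nonempty subset `V ⊆ [n]`, an undirected
tree on `V` with a designated root `r ∈ V` (represented as a graph on `Fin n` whose edges
lie inside `V`, acyclic and connected on `V`), and for each vertex outside `V` exactly one
arc to a vertex `≠ r`, no two arcs ending at the same vertex.  (The arc map is recorded as
a total function that is the identity on `V`.) -/
structure GConfig (n : ℕ) where
  V : Finset (Fin n)
  root : Fin n
  hroot : root ∈ V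
  tree : SimpleGraph (Fin n)
  hedge : ∀ v w, tree.Adj v w → v ∈ V ∧ w ∈ V
  hconn : ∀ v ∈ V, ∀ w ∈ V, tree.Reachable v w
  hacyc : tree.IsAcyclic
  arc : Fin n → Fin n
  harcV : ∀ v ∈ V, arc v = v
  harc : ∀ v, v ∉ V → arc v ≠ root
  hinj : ∀ v w, v ∉ V → w ∉ V → arc v = arc w → v = w


/-!
A configuration splits into its vertex set `V`, a rooted tree on `V`, and an injection of the
`n - |V|` vertices outside `V` into the `n - 1` vertices other than the root; there are
`(n - 1)! / (|V| - 1)!` such injections, so everything reduces to Cayley's formula: there are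
`k ^ (k - 1)` rooted trees on `k` labelled vertices.

A rooted tree is encoded by its parent map `p` (`p r = r`, and every vertex reaches `r` under
iteration); the tree is the graph with edges `{x, p x}`, which is connected with `k - 1` edges.
Cayley's formula then follows from Joyal's bijection between endofunctions `f` of a `k`-set and
parent maps with a marked vertex `a`: list the periodic points of `f` as `c₀, …, c_{m-1}` by an
enumeration that depends only on the set of periodic points; then `f c₀ → f c₁ → ⋯ → f c_{m-1}`
is the path from `a` to the root, and `p = f` off the periodic points. Hence
`k ^ k = k · #{rooted trees}`.
-/

open Function Finset

/-! ### Parent maps -/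

def IsParentMap {α : Type*} (p : α → α) (r : α) : Prop :=
  p r = r ∧ ∀ x, ∃ n, p^[n] x = r

namespace IsParentMap

variable {α : Type*} {p : α → α} {r : α} (hp : IsParentMap p r)

noncomputable def depth (x : α) : ℕ := by classical exact Nat.find (hp.2 x)

lemma iterate_eq_root_iff {x : α} {n : ℕ} : p^[n] x = r ↔ hp.depth x ≤ n := by
  classical
  refine ⟨fun h => Nat.find_min' (hp.2 x) h, fun h => ?_⟩
  rw [← Nat.sub_add_cancel h, iterate_add_apply, depth, Nat.find_spec (hp.2 x),
    iterate_fixed hp.1]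

lemma iterate_depth (x : α) : p^[hp.depth x] x = r := hp.iterate_eq_root_iff.2 le_rfl

lemma depth_eq_zero {x : α} : hp.depth x = 0 ↔ x = r := by
  rw [← hp.iterate_eq_root_iff.trans Nat.le_zero, iterate_zero_apply]

lemma depth_iterate (x : α) (n : ℕ) : hp.depth (p^[n] x) = hp.depth x - n := by
  refine le_antisymm ?_ ?_
  · rw [← hp.iterate_eq_root_iff, ← iterate_add_apply]
    exact hp.iterate_eq_root_iff.2 (by omega)
  · have := hp.iterate_depth (p^[n] x)
    rw [← iterate_add_apply, hp.iterate_eq_root_iff] at this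
    omega

lemma depth_apply (x : α) : hp.depth (p x) = hp.depth x - 1 := hp.depth_iterate x 1

lemma depth_pos {x : α} (hx : x ≠ r) : 0 < hp.depth x :=
  Nat.pos_of_ne_zero (hp.depth_eq_zero.not.2 hx)

include hp in
lemma apply_ne_self {x : α} (hx : x ≠ r) : p x ≠ x := by
  intro h
  have := hp.depth_apply x
  rw [h] at this
  have := hp.depth_pos hx
  omega

include hp in
lemma apply_apply_ne_self {x : α} (hx : p x ≠ x) : p (p x) ≠ x := by
  intro h
  have := hp.depth_iterate x 2
  rw [iterate_succ_apply', iterate_one, h] at this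
  have := hp.depth_pos (x := x) (by rintro rfl; exact hx hp.1)
  omega

lemma iterate_injOn {x : α} {m n : ℕ} (hm : m ≤ hp.depth x) (hn : n ≤ hp.depth x)
    (h : p^[m] x = p^[n] x) : m = n := by
  have := congrArg hp.depth h
  rw [hp.depth_iterate, hp.depth_iterate] at this
  omega

end IsParentMap

def RootedParentMap (α : Type*) := {q : α × (α → α) // IsParentMap q.2 q.1}

/-! ### Joyal's bijection -/

namespace Joyal

variable {α : Type*}

section Enumeration

variable (S : Finset α)

noncomputable def index [DecidableEq α] (x : α) : ℕ :=
  if hx : x ∈ S then S.equivFin ⟨x, hx⟩ else 0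

noncomputable def entry [Nonempty α] (j : ℕ) : α :=
  if hj : j < #S then S.equivFin.symm ⟨j, hj⟩ else Classical.arbitrary α

variable {S}

lemma index_lt [DecidableEq α] {x : α} (hx : x ∈ S) : index S x < #S := by
  simp only [index, dif_pos hx, Fin.is_lt]

lemma entry_mem [Nonempty α] {j : ℕ} (hj : j < #S) : entry S j ∈ S := by
  simp only [entry, dif_pos hj, coe_mem]

variable [DecidableEq α] [Nonempty α]

lemma entry_index {x : α} (hx : x ∈ S) : entry S (index S x) = x := by
  simp [entry, index, hx]

lemma index_entry {j : ℕ} (hj : j < #S) : index S (entry S j) = j := by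
  simp [entry, index, hj]

end Enumeration

section Forward

variable [Fintype α] (f : α → α)

noncomputable def cycle : Finset α := by classical exact univ.filter (· ∈ periodicPts f)

variable {f}

lemma mem_cycle {x : α} : x ∈ cycle f ↔ x ∈ periodicPts f := by
  classical simp [cycle]

lemma bijOn_cycle : Set.BijOn f (cycle f) (cycle f) := by
  convert bijOn_periodicPts f <;> ext <;> simp [mem_cycle]

lemma exists_iterate_mem_cycle (x : α) : ∃ t, f^[t] x ∈ cycle f := by
  obtain ⟨i, j, hij, hne⟩ : ∃ i j, f^[i] x = f^[j] x ∧ i ≠ j := by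
    simpa [Injective] using not_injective_infinite_finite (f^[·] x)
  wlog hlt : i < j generalizing i j
  · exact this j i hij.symm hne.symm (by omega)
  refine ⟨i, mem_cycle.2 (mk_mem_periodicPts (n := j - i) (by omega) ?_)⟩
  rw [IsPeriodicPt, IsFixedPt, ← iterate_add_apply, Nat.sub_add_cancel hlt.le, hij]

lemma card_cycle_pos [Nonempty α] : 0 < #(cycle f) :=
  card_pos.2 ⟨_, (exists_iterate_mem_cycle (Classical.arbitrary α)).choose_spec⟩

variable [Nonempty α] (f)

noncomputable def spine (j : ℕ) : α := f (entry (cycle f) j)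

variable {f}

lemma spine_mem {j : ℕ} (hj : j < #(cycle f)) : spine f j ∈ cycle f :=
  bijOn_cycle.mapsTo (entry_mem hj)

variable [DecidableEq α]

variable (f) in
noncomputable def pos (x : α) : ℕ := index (cycle f) (Function.invFunOn f (cycle f) x)

lemma pos_lt {x : α} (hx : x ∈ cycle f) : pos f x < #(cycle f) :=
  index_lt (bijOn_cycle.surjOn.mapsTo_invFunOn hx)

lemma spine_pos {x : α} (hx : x ∈ cycle f) : spine f (pos f x) = x := by
  rw [spine, pos, entry_index (bijOn_cycle.surjOn.mapsTo_invFunOn hx)]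
  exact bijOn_cycle.invOn_invFunOn.2 hx

lemma pos_spine {j : ℕ} (hj : j < #(cycle f)) : pos f (spine f j) = j := by
  rw [pos, spine, bijOn_cycle.invOn_invFunOn.1 (entry_mem hj), index_entry hj]

lemma spine_injOn {i j : ℕ} (hi : i < #(cycle f)) (hj : j < #(cycle f))
    (h : spine f i = spine f j) : i = j := by
  rw [← pos_spine hi, h, pos_spine hj]

variable (f)

noncomputable def parent (x : α) : α :=
  if x ∈ cycle f then (if pos f x + 1 < #(cycle f) then spine f (pos f x + 1) else x) else f x

noncomputable def root : α := spine f (#(cycle f) - 1)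

variable {f}

lemma parent_of_not_mem {x : α} (hx : x ∉ cycle f) : parent f x = f x := by
  rw [parent, if_neg hx]

lemma parent_spine {j : ℕ} (hj : j + 1 < #(cycle f)) :
    parent f (spine f j) = spine f (j + 1) := by
  rw [parent, if_pos (spine_mem (f := f) (by omega)), pos_spine (by omega), if_pos hj]

lemma parent_root : parent f (root f) = root f := by
  have := card_cycle_pos (f := f)
  rw [root, parent, if_pos (spine_mem (f := f) (by omega)), pos_spine (by omega), if_neg (by omega)]

lemma iterate_parent_spine {i j : ℕ} (h : j + i < #(cycle f)) :
    (parent f)^[i] (spine f j) = spine f (j + i) := by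
  induction i with
  | zero => rfl
  | succ i ih => rw [iterate_succ_apply', ih (by omega), parent_spine (by omega), add_assoc]

lemma parent_reaches_root_of_mem {x : α} (hx : x ∈ cycle f) :
    ∃ n, (parent f)^[n] x = root f := by
  have := pos_lt hx
  refine ⟨#(cycle f) - 1 - pos f x, ?_⟩
  rw [← spine_pos hx, pos_spine (pos_lt hx), iterate_parent_spine (by omega), root,
    Nat.add_sub_cancel' (by omega)]

variable (f) in
lemma isParentMap_parent : IsParentMap (parent f) (root f) := by
  refine ⟨parent_root, fun x => ?_⟩
  obtain ⟨t, ht⟩ := exists_iterate_mem_cycle (f := f) x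
  induction t generalizing x with
  | zero => exact parent_reaches_root_of_mem ht
  | succ t ih =>
    by_cases hx : x ∈ cycle f
    · exact parent_reaches_root_of_mem hx
    · obtain ⟨n, hn⟩ := ih (f x) (by rwa [← iterate_succ_apply])
      exact ⟨n + 1, by rwa [iterate_succ_apply, parent_of_not_mem hx]⟩

lemma depth_spine_zero : (isParentMap_parent f).depth (spine f 0) = #(cycle f) - 1 := by
  have hm := card_cycle_pos (f := f)
  refine le_antisymm ((isParentMap_parent f).iterate_eq_root_iff.1 ?_) ?_
  · rw [iterate_parent_spine (by omega), zero_add, root]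
  · have h := (isParentMap_parent f).iterate_depth (spine f 0)
    by_contra hlt
    rw [iterate_parent_spine (by omega), zero_add] at h
    have := spine_injOn (j := #(cycle f) - 1) (by omega) (by omega) h
    omega

end Forward

section Backward

variable [DecidableEq α] {p : α → α} {r : α} (hp : IsParentMap p r) (a : α)

noncomputable def path : Finset α := (range (hp.depth a + 1)).image (p^[·] a)

lemma mem_path {x : α} : x ∈ path hp a ↔ ∃ j ≤ hp.depth a, p^[j] a = x := by
  simp [path]

lemma card_path : #(path hp a) = hp.depth a + 1 := by
  rw [path, card_image_of_injOn, card_range]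
  intro i hi j hj h
  simp only [coe_range, Set.mem_Iio] at hi hj
  exact hp.iterate_injOn (by omega) (by omega) h

noncomputable def toEndo (x : α) : α := if x ∈ path hp a then p^[index (path hp a) x] a else p x

variable {a}

lemma toEndo_of_mem {x : α} (hx : x ∈ path hp a) :
    toEndo hp a x = p^[index (path hp a) x] a := by
  rw [toEndo, if_pos hx]

lemma toEndo_of_not_mem {x : α} (hx : x ∉ path hp a) : toEndo hp a x = p x := by
  rw [toEndo, if_neg hx]

lemma toEndo_entry [Nonempty α] {j : ℕ} (hj : j < #(path hp a)) :
    toEndo hp a (entry (path hp a) j) = p^[j] a := by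
  rw [toEndo, if_pos (entry_mem hj), index_entry hj]

lemma mapsTo_toEndo : Set.MapsTo (toEndo hp a) (path hp a) (path hp a) := by
  intro x hx
  have := index_lt hx
  rw [card_path] at this
  rw [Finset.mem_coe, toEndo_of_mem hp hx]
  exact (mem_path hp a).2 ⟨_, by omega, rfl⟩

lemma injOn_toEndo [Nonempty α] : Set.InjOn (toEndo hp a) (path hp a) := by
  intro x hx y hy h
  have hx' := index_lt hx
  have hy' := index_lt hy
  rw [card_path] at hx' hy'
  rw [toEndo_of_mem hp hx, toEndo_of_mem hp hy] at h
  rw [← entry_index hx, ← entry_index hy, hp.iterate_injOn (by omega) (by omega) h]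

lemma exists_iterate_toEndo_mem_path (x : α) : ∃ t, (toEndo hp a)^[t] x ∈ path hp a := by
  induction h : hp.depth x generalizing x with
  | zero =>
    refine ⟨0, (mem_path hp a).2 ⟨_, le_rfl, ?_⟩⟩
    rw [hp.iterate_depth, (hp.depth_eq_zero).1 h, iterate_zero_apply]
  | succ n ih =>
    by_cases hx : x ∈ path hp a
    · exact ⟨0, hx⟩
    · obtain ⟨t, ht⟩ := ih (p x) (by rw [hp.depth_apply, h, Nat.add_sub_cancel])
      exact ⟨t + 1, by rwa [iterate_succ_apply, toEndo_of_not_mem hp hx]⟩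

lemma cycle_toEndo [Fintype α] [Nonempty α] : cycle (toEndo hp a) = path hp a := by
  ext x
  rw [mem_cycle]
  constructor
  · rintro ⟨n, hn, hxn⟩
    obtain ⟨t, ht⟩ := exists_iterate_toEndo_mem_path hp x
    have hle : t ≤ n * (t + 1) := by nlinarith
    rw [← (hxn.mul_const (t + 1)).eq, ← Nat.sub_add_cancel hle, iterate_add_apply]
    exact (mapsTo_toEndo hp).iterate _ ht
  · intro hx
    have hinj := ((mapsTo_toEndo hp (a := a)).restrict_inj).2 (injOn_toEndo hp)
    exact Semiconj.mapsTo_periodicPts (g := Subtype.val) (fb := toEndo hp a) (fun _ => rfl)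
      (hinj.mem_periodicPts ⟨x, hx⟩)

end Backward

section Bijection

variable [Fintype α] [DecidableEq α] [Nonempty α]

section OfParentMap

variable {p : α → α} {r : α} (hp : IsParentMap p r) (a : α)

lemma card_cycle_toEndo : #(cycle (toEndo hp a)) = hp.depth a + 1 := by
  rw [cycle_toEndo, card_path]

lemma spine_toEndo {j : ℕ} (hj : j ≤ hp.depth a) : spine (toEndo hp a) j = p^[j] a := by
  rw [spine, cycle_toEndo, toEndo_entry hp (by rw [card_path]; omega)]

lemma spine_toEndo_zero : spine (toEndo hp a) 0 = a :=
  spine_toEndo hp a (Nat.zero_le _)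

lemma root_toEndo : root (toEndo hp a) = r := by
  rw [root, card_cycle_toEndo, Nat.add_sub_cancel, spine_toEndo hp a le_rfl, hp.iterate_depth]

lemma parent_toEndo_spine {j : ℕ} (hj : j ≤ hp.depth a) :
    parent (toEndo hp a) (spine (toEndo hp a) j) = p (spine (toEndo hp a) j) := by
  rcases hj.lt_or_eq with hj | rfl
  · rw [parent_spine (by rw [card_cycle_toEndo]; omega), spine_toEndo hp a hj,
      spine_toEndo hp a hj.le, iterate_succ_apply']
  · have h := parent_root (f := toEndo hp a)
    rw [root_toEndo] at h
    rw [spine_toEndo hp a le_rfl, hp.iterate_depth, h, hp.1]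

lemma parent_toEndo : parent (toEndo hp a) = p := by
  funext x
  by_cases hx : x ∈ cycle (toEndo hp a)
  · have hj := pos_lt hx
    rw [card_cycle_toEndo] at hj
    rw [← spine_pos hx]
    exact parent_toEndo_spine hp a (by omega)
  · rw [parent_of_not_mem hx, toEndo_of_not_mem hp (by rwa [cycle_toEndo] at hx)]

end OfParentMap

variable (f : α → α)

lemma path_parent : path (isParentMap_parent f) (spine f 0) = cycle f := by
  have hm := card_cycle_pos (f := f)
  ext x
  rw [mem_path, depth_spine_zero]
  constructor
  · rintro ⟨j, hj, rfl⟩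
    rw [iterate_parent_spine (by omega), zero_add]
    exact spine_mem (by omega)
  · intro hx
    have := pos_lt hx
    refine ⟨pos f x, by omega, ?_⟩
    rw [iterate_parent_spine (by omega), zero_add, spine_pos hx]

lemma toEndo_parent : toEndo (isParentMap_parent f) (spine f 0) = f := by
  funext x
  by_cases hx : x ∈ cycle f
  · rw [toEndo_of_mem _ (by rwa [path_parent]), path_parent,
      iterate_parent_spine (by simpa using index_lt hx), zero_add, spine, entry_index hx]
  · rw [toEndo_of_not_mem _ (by rwa [path_parent]), parent_of_not_mem hx]

noncomputable def endoEquiv : (α → α) ≃ RootedParentMap α × α where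
  toFun f := (⟨(root f, parent f), isParentMap_parent f⟩, spine f 0)
  invFun q := toEndo q.1.2 q.2
  left_inv := toEndo_parent
  right_inv := fun ⟨⟨(_, _), hp⟩, a⟩ =>
    Prod.ext (Subtype.ext (Prod.ext (root_toEndo hp a) (parent_toEndo hp a)))
      (spine_toEndo_zero hp a)

end Bijection

end Joyal

theorem card_rootedParentMap (α : Type*) [Fintype α] [Nonempty α] :
    Nat.card (RootedParentMap α) = Fintype.card α ^ (Fintype.card α - 1) := by
  classical
  have h := Nat.card_congr (Joyal.endoEquiv (α := α))
  rw [Nat.card_prod, Nat.card_fun, Nat.card_eq_fintype_card] at h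
  have hpos := Fintype.card_pos (α := α)
  rw [← pow_sub_one_mul hpos.ne'] at h
  exact (Nat.eq_of_mul_eq_mul_right hpos h).symm

/-! ### Rooted trees as parent maps -/

open SimpleGraph

def RootedTreeGraph (β : Type*) := {q : β × SimpleGraph β // q.2.IsTree}

section ParentGraph

variable {β : Type*}

def parentGraph (p : β → β) : SimpleGraph β := SimpleGraph.fromRel fun x y => p x = y

namespace IsParentMap

variable {p : β → β} {r : β} (hp : IsParentMap p r)

include hp in
lemma adj_apply {x : β} (hx : x ≠ r) : (parentGraph p).Adj x (p x) :=
  ⟨(hp.apply_ne_self hx).symm, Or.inl rfl⟩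

lemma depth_le_of_adj {x y : β} (h : (parentGraph p).Adj x y) :
    hp.depth x ≤ hp.depth y + 1 := by
  rcases h.2 with rfl | rfl <;> rw [hp.depth_apply] <;> omega

lemma eq_apply_of_adj_of_depth_lt {x y : β} (h : (parentGraph p).Adj x y)
    (hlt : hp.depth y < hp.depth x) : y = p x := by
  rcases h.2 with h' | rfl
  · exact h'.symm
  · rw [hp.depth_apply] at hlt
    omega

include hp in
lemma reachable_root (x : β) : (parentGraph p).Reachable x r := by
  induction h : hp.depth x generalizing x with
  | zero => rw [hp.depth_eq_zero.1 h]
  | succ n ih =>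
    have hx : x ≠ r := hp.depth_eq_zero.not.1 (by omega)
    exact (hp.adj_apply hx).reachable.trans (ih (p x) (by rw [hp.depth_apply, h]; rfl))

include hp in
lemma connected_parentGraph : (parentGraph p).Connected :=
  (connected_iff_exists_forall_reachable _).2 ⟨r, fun x => (hp.reachable_root x).symm⟩

lemma dist_parentGraph (x : β) : (parentGraph p).dist x r = hp.depth x := by
  refine le_antisymm ?_ ?_
  · induction h : hp.depth x generalizing x with
    | zero => rw [hp.depth_eq_zero.1 h, dist_self]
    | succ n ih =>
      have hx : x ≠ r := hp.depth_eq_zero.not.1 (by omega)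
      calc (parentGraph p).dist x r
          ≤ (parentGraph p).dist x (p x) + (parentGraph p).dist (p x) r :=
            hp.connected_parentGraph.dist_triangle
        _ ≤ 1 + n := by
            rw [dist_eq_one_iff_adj.2 (hp.adj_apply hx)]
            exact Nat.add_le_add_left (ih (p x) (by rw [hp.depth_apply, h]; rfl)) 1
        _ = n + 1 := by omega
  · obtain ⟨w, hw⟩ := hp.connected_parentGraph.exists_walk_length_eq_dist x r
    rw [← hw]
    clear hw
    induction w with
    | nil => exact (hp.depth_eq_zero.2 rfl).trans_le (Nat.zero_le _)
    | cons h q ih =>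
      have := ih hp
      have := hp.depth_le_of_adj h
      rw [Walk.length_cons]
      omega

lemma bijective_edgeOfNeRoot :
    Bijective fun x : {x // x ≠ r} =>
      (⟨s(x.1, p x.1), hp.adj_apply x.2⟩ : (parentGraph p).edgeSet) := by
  refine ⟨fun x y hxy => ?_, ?_⟩
  · rcases Sym2.eq_iff.1 (congrArg Subtype.val hxy) with ⟨h, -⟩ | ⟨h₁, h₂⟩
    · exact Subtype.ext h
    · exact absurd (by rw [h₂, h₁]) (hp.apply_apply_ne_self (hp.apply_ne_self x.2))
  · rintro ⟨e, he⟩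
    induction e using Sym2.ind with
    | _ u v =>
    have hadj : (parentGraph p).Adj u v := he
    rcases hadj.2 with rfl | rfl
    · exact ⟨⟨u, fun hu => hadj.1 (by rw [hu, hp.1])⟩, rfl⟩
    · exact ⟨⟨v, fun hv => hadj.1 (by rw [hv, hp.1])⟩, Subtype.ext Sym2.eq_swap⟩

include hp in
lemma card_edgeSet_parentGraph [Finite β] :
    Nat.card (parentGraph p).edgeSet + 1 = Nat.card β := by
  have := Fintype.ofFinite β
  classical
  rw [← Nat.card_eq_of_bijective _ hp.bijective_edgeOfNeRoot, Nat.card_eq_fintype_card,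
    Nat.card_eq_fintype_card, Fintype.card_subtype_compl, Fintype.card_subtype_eq]
  have := Fintype.card_pos_iff.2 ⟨r⟩
  omega

include hp in
lemma isTree_parentGraph [Finite β] : (parentGraph p).IsTree :=
  isTree_iff_connected_and_card.2 ⟨hp.connected_parentGraph, hp.card_edgeSet_parentGraph⟩

include hp in
lemma eq_of_parentGraph_eq {q : β → β} (hq : IsParentMap q r)
    (h : parentGraph p = parentGraph q) : p = q := by
  have hdepth : hp.depth = hq.depth := by
    funext y
    rw [← hp.dist_parentGraph, ← hq.dist_parentGraph, h]
  funext x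
  by_cases hx : x = r
  · rw [hx, hp.1, hq.1]
  · refine (hp.eq_apply_of_adj_of_depth_lt (h ▸ hq.adj_apply hx) ?_).symm
    rw [hdepth, hq.depth_apply]
    have := hq.depth_pos hx
    omega

end IsParentMap

variable {G : SimpleGraph β} (hG : G.Connected) (r : β)

include hG in
lemma exists_adj_dist_lt {x : β} (hx : x ≠ r) :
    ∃ y, G.Adj x y ∧ G.dist y r < G.dist x r := by
  obtain ⟨w, hw⟩ := hG.exists_walk_length_eq_dist x r
  cases w with
  | nil => exact absurd rfl hx
  | cons h q =>
    refine ⟨_, h, ?_⟩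
    have := dist_le q
    rw [← hw, Walk.length_cons]
    omega

noncomputable def treeParent (x : β) : β := by
  classical exact if hx : x = r then r else (exists_adj_dist_lt hG r hx).choose

lemma treeParent_root : treeParent hG r r = r := dif_pos rfl

lemma adj_treeParent {x : β} (hx : x ≠ r) : G.Adj x (treeParent hG r x) := by
  rw [treeParent, dif_neg hx]
  exact (exists_adj_dist_lt hG r hx).choose_spec.1

lemma dist_treeParent_lt {x : β} (hx : x ≠ r) : G.dist (treeParent hG r x) r < G.dist x r := by
  rw [treeParent, dif_neg hx]
  exact (exists_adj_dist_lt hG r hx).choose_spec.2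

lemma isParentMap_treeParent : IsParentMap (treeParent hG r) r := by
  refine ⟨treeParent_root hG r, fun x => ?_⟩
  induction h : G.dist x r using Nat.strong_induction_on generalizing x with
  | _ n ih =>
  by_cases hx : x = r
  · exact ⟨0, hx⟩
  · obtain ⟨m, hm⟩ := ih _ (h ▸ dist_treeParent_lt hG r hx) (treeParent hG r x) rfl
    exact ⟨m + 1, by rwa [iterate_succ_apply]⟩

lemma parentGraph_treeParent [Finite β] (hT : G.IsTree) :
    parentGraph (treeParent hT.connected r) = G := by
  have hle : parentGraph (treeParent hT.connected r) ≤ G := by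
    rintro x y ⟨hxy, rfl | rfl⟩
    · exact adj_treeParent _ r (fun hx => hxy (by rw [hx, treeParent_root]))
    · exact (adj_treeParent _ r (fun hy => hxy (by rw [hy, treeParent_root]))).symm
  exact (isTree_iff_maximal_isAcyclic.1
    (isParentMap_treeParent hT.connected r).isTree_parentGraph).2.eq_of_le hT.isAcyclic hle

noncomputable def rootedTreeEquiv [Finite β] : RootedParentMap β ≃ RootedTreeGraph β :=
  Equiv.ofBijective (fun q => ⟨(q.1.1, parentGraph q.1.2), q.2.isTree_parentGraph⟩) <| by
    refine ⟨?_, ?_⟩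
    · rintro ⟨⟨r, p⟩, hp⟩ ⟨⟨r', q⟩, hq⟩ h
      obtain ⟨rfl, h⟩ := Prod.mk.inj (congrArg Subtype.val h)
      exact Subtype.ext (Prod.ext rfl (hp.eq_of_parentGraph_eq hq h))
    · rintro ⟨⟨r, G⟩, hG⟩
      exact ⟨⟨(r, treeParent hG.connected r), isParentMap_treeParent hG.connected r⟩,
        Subtype.ext (Prod.ext rfl (parentGraph_treeParent r hG))⟩

theorem card_rootedTreeGraph [Fintype β] [Nonempty β] :
    Nat.card (RootedTreeGraph β) = Fintype.card β ^ (Fintype.card β - 1) := by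
  rw [← Nat.card_congr rootedTreeEquiv, card_rootedParentMap]

end ParentGraph

/-! ### Counting configurations -/

section Induce

variable {α : Type*} {G : SimpleGraph α} {s : Set α}

lemma SimpleGraph.Walk.forall_mem_support_of_support_subset (hs : G.support ⊆ s) {u v : α}
    (w : G.Walk u v) (hu : u ∈ s) : ∀ x ∈ w.support, x ∈ s := by
  induction w with
  | nil => simpa using hu
  | cons h q ih =>
    simp only [Walk.support_cons, List.mem_cons, forall_eq_or_imp]
    exact ⟨hu, ih (hs ⟨_, h.symm⟩)⟩

lemma reachable_induce_iff (hs : G.support ⊆ s) {a b : s} :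
    (G.induce s).Reachable a b ↔ G.Reachable a b := by
  refine ⟨fun h => h.map (Embedding.induce s).toHom, fun ⟨w⟩ => ?_⟩
  exact ⟨w.induce s (Walk.forall_mem_support_of_support_subset hs w a.2)⟩

lemma isAcyclic_of_isAcyclic_induce (hs : G.support ⊆ s) (h : (G.induce s).IsAcyclic) :
    G.IsAcyclic := by
  intro u c hc
  have hu : u ∈ s := hs ⟨_, c.adj_snd hc.not_nil⟩
  have hw := Walk.forall_mem_support_of_support_subset hs c hu
  refine h (c.induce s hw) ?_
  rw [← Walk.isCycle_map_iff_of_injective (f := (Embedding.induce s).toHom) Subtype.val_injective,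
    Walk.map_induce]
  exact hc

end Induce

abbrev RootedTreeOn {α : Type*} (V : Finset α) :=
  {q : α × SimpleGraph α // q.1 ∈ V ∧ (∀ v w, q.2.Adj v w → v ∈ V ∧ w ∈ V) ∧
    (∀ v ∈ V, ∀ w ∈ V, q.2.Reachable v w) ∧ q.2.IsAcyclic}

/-- There is no rooted tree on no vertices, but `0 ^ (0 - 1) = 1`. -/
def rootedTreeCount (k : ℕ) : ℕ := if k = 0 then 0 else k ^ (k - 1)

section RootedTreeOn

variable {α : Type*} (V : Finset α)

noncomputable def rootedTreeOnEquiv : RootedTreeOn V ≃ RootedTreeGraph (V : Set α) where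
  toFun := fun ⟨(r, G), hr, hedge, hconn, hacyc⟩ =>
    have hs : G.support ⊆ V := fun v ⟨w, h⟩ => (hedge v w h).1
    ⟨(⟨r, hr⟩, G.induce V),
      ⟨(connected_iff _).2
          ⟨fun a b => (reachable_induce_iff hs).2 (hconn a a.2 b b.2), ⟨⟨r, hr⟩⟩⟩,
        hacyc.induce _⟩⟩
  invFun := fun ⟨(r, H), hH⟩ =>
    have hs : H.spanningCoe.support ⊆ V := by
      rw [support_spanningCoe]
      exact Subtype.coe_image_subset _ _
    ⟨(r, H.spanningCoe), r.2, fun v w h => ⟨hs ⟨w, h⟩, hs ⟨v, h.symm⟩⟩,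
      fun v hv w hw => (hH.connected ⟨v, hv⟩ ⟨w, hw⟩).map (Embedding.map _ H).toHom,
      isAcyclic_of_isAcyclic_induce hs (induce_spanningCoe ▸ hH.isAcyclic)⟩
  left_inv := fun ⟨(r, G), hr, hedge, _, _⟩ =>
    Subtype.ext <| Prod.ext rfl <|
      (spanningCoe_induce_eq_self _ _).2 fun v ⟨w, h⟩ => (hedge v w h).1
  right_inv := fun ⟨(r, H), _⟩ => Subtype.ext (Prod.ext rfl induce_spanningCoe)

theorem card_rootedTreeOn [Fintype α] : Nat.card (RootedTreeOn V) = rootedTreeCount #V := by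
  rw [rootedTreeCount]
  split_ifs with hV
  · have : IsEmpty (RootedTreeOn V) := ⟨fun q => by simpa [card_eq_zero.1 hV] using q.2.1⟩
    exact Nat.card_of_isEmpty
  · have : Nonempty (V : Set α) := (card_ne_zero.1 hV).to_subtype
    rw [Nat.card_congr (rootedTreeOnEquiv V), card_rootedTreeGraph]
    simp

end RootedTreeOn

abbrev ArcMap {α : Type*} (V : Finset α) (r : α) :=
  {a : α → α // (∀ v ∈ V, a v = v) ∧ (∀ v, v ∉ V → a v ≠ r) ∧
    ∀ v w, v ∉ V → w ∉ V → a v = a w → v = w}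

section ArcMap

variable {α : Type*} [DecidableEq α] (V : Finset α) (r : α)

def arcMapEquiv : ArcMap V r ≃ ({v // v ∉ V} ↪ {y // y ≠ r}) where
  toFun a := ⟨fun v => ⟨a.1 v, a.2.2.1 v v.2⟩,
    fun v w h => Subtype.ext (a.2.2.2 v w v.2 w.2 (congrArg Subtype.val h))⟩
  invFun e := ⟨fun v => if h : v ∈ V then v else e ⟨v, h⟩,
    fun v hv => dif_pos hv,
    fun v hv => by simpa only [dif_neg hv] using (e ⟨v, hv⟩).2,
    fun v w hv hw h => by
      simp only [dif_neg hv, dif_neg hw] at h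
      exact congrArg Subtype.val (e.injective (Subtype.ext h))⟩
  left_inv a := by
    refine Subtype.ext (funext fun v => ?_)
    by_cases hv : v ∈ V
    · simp [hv, a.2.1 v hv]
    · simp only [hv, dif_neg, not_false_eq_true]
      rfl
  right_inv e := by
    ext v
    simp [v.2]

theorem card_arcMap [Fintype α] :
    Nat.card (ArcMap V r) = (Fintype.card α - 1).descFactorial (Fintype.card α - #V) := by
  rw [Nat.card_congr (arcMapEquiv V r), Nat.card_eq_fintype_card, Fintype.card_embedding_eq,
    Fintype.card_subtype_compl, Fintype.card_subtype_compl, Fintype.card_coe,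
    Fintype.card_subtype_eq]

end ArcMap

def gconfigEquiv (n : ℕ) :
    GConfig n ≃ Σ V : Finset (Fin n), Σ t : RootedTreeOn V, ArcMap V t.1.1 where
  toFun c := ⟨c.V, ⟨(c.root, c.tree), c.hroot, c.hedge, c.hconn, c.hacyc⟩,
    ⟨c.arc, c.harcV, c.harc, c.hinj⟩⟩
  invFun x :=
    { V := x.1, root := x.2.1.1.1, hroot := x.2.1.2.1, tree := x.2.1.1.2,
      hedge := x.2.1.2.2.1, hconn := x.2.1.2.2.2.1, hacyc := x.2.1.2.2.2.2,
      arc := x.2.2.1, harcV := x.2.2.2.1, harc := x.2.2.2.2.1, hinj := x.2.2.2.2.2 }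
  left_inv _ := rfl
  right_inv _ := rfl

theorem card_gconfig (n : ℕ) :
    Nat.card (GConfig n) =
      ∑ k ∈ range (n + 1),
        n.choose k * (rootedTreeCount k * (n - 1).descFactorial (n - k)) := by
  classical
  rw [Nat.card_congr (gconfigEquiv n), Nat.card_sigma]
  simp only [Nat.card_sigma, card_arcMap, sum_const, card_univ, smul_eq_mul,
    ← Nat.card_eq_fintype_card, Nat.card_fin, card_rootedTreeOn]
  rw [← powerset_univ, sum_powerset_apply_card (fun k => rootedTreeCount k *
    (n - 1).descFactorial (n - k)), card_univ, Fintype.card_fin]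
  simp only [smul_eq_mul]

theorem stmt15_general (n : ℕ) :
    Nat.card (GConfig n) =
      ∑ k ∈ Finset.Icc 1 n, n.choose k * k ^ (k - 1) *
        ((n - 1).factorial / (k - 1).factorial) := by
  rw [card_gconfig, range_eq_Ico, sum_eq_sum_Ico_succ_bot n.succ_pos, rootedTreeCount, if_pos rfl,
    zero_mul, mul_zero, zero_add, zero_add, Nat.succ_eq_add_one, Ico_add_one_right_eq_Icc]
  refine sum_congr rfl fun k hk => ?_
  rw [mem_Icc] at hk
  rw [rootedTreeCount, if_neg (by omega), mul_assoc, Nat.descFactorial_eq_div (by omega),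
    show n - 1 - (n - k) = k - 1 by omega]

/-- The number of rooted `G`-configurations of size `n` (root any vertex) equals
`∑_{k=1}^n C(n,k) · k^{k-1} · (n-1)!/(k-1)!`. -/
theorem stmt15 (n : ℕ) (hn : 1 ≤ n) :
    Nat.card (GConfig n) =
      ∑ k ∈ Finset.Icc 1 n, n.choose k * k ^ (k - 1) *
        ((n - 1).factorial / (k - 1).factorial) :=
  stmt15_general n
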